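/- arXiv:0712.1172 — 7 statements merged into one kernel-verified Lean document; each statement's English description precedes it below -/
import Mathlib

section
/- Let {s_n} be a sequence of nonnegative reals satisfying s_{n+1} ≤ (1−α_n)s_n + α_n β_n for n ≥ 0, where α_n ∈ (0,1), Σ α_n = ∞, and Σ_{n=0}^∞ |α_n β_n| < ∞. Then s_n → 0. -/
/-!
Unrolling the recursion from an index `m` gives
`s n ≤ (∏_{m ≤ i < n} (1 - a i)) s m + ∑_{m ≤ i < n} |a i b i|`.
Since `1 - x ≤ exp (-x)`, the product is at most `exp (-∑_{m ≤ i < n} a i)`, which tends to `0`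
as `n → ∞` because `∑ a i` diverges, while the sum is bounded by the tail `∑_{i ≥ m} |a i b i|`
of a convergent series. Choosing `m` with a small tail and then `n` large makes `s n` small.
-/

open Filter Topology Finset

lemma le_prod_mul_add_sum_of_le_mul_add {s r c : ℕ → ℝ}
    (hr₀ : ∀ n, 0 ≤ r n) (hr₁ : ∀ n, r n ≤ 1) (hc : ∀ n, 0 ≤ c n)
    (hrec : ∀ n, s (n + 1) ≤ r n * s n + c n) {m n : ℕ} (hmn : m ≤ n) :
    s n ≤ (∏ i ∈ Ico m n, r i) * s m + ∑ i ∈ Ico m n, c i := by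
  induction n, hmn using Nat.le_induction with
  | base => simp
  | succ n hmn ih =>
    have hS : r n * ∑ i ∈ Ico m n, c i ≤ ∑ i ∈ Ico m n, c i :=
      mul_le_of_le_one_left (sum_nonneg fun i _ => hc i) (hr₁ n)
    rw [prod_Ico_succ_top hmn, sum_Ico_succ_top hmn]
    calc s (n + 1) ≤ r n * s n + c n := hrec n
      _ ≤ r n * ((∏ i ∈ Ico m n, r i) * s m + ∑ i ∈ Ico m n, c i) + c n := by
        gcongr; exact hr₀ n
      _ ≤ (∏ i ∈ Ico m n, r i) * r n * s m + (∑ i ∈ Ico m n, c i + c n) := by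
        linarith

lemma prod_one_sub_le_exp_neg_sum {ι : Type*} (t : Finset ι) {a : ι → ℝ}
    (ha : ∀ i ∈ t, a i ≤ 1) :
    ∏ i ∈ t, (1 - a i) ≤ Real.exp (-∑ i ∈ t, a i) := by
  rw [← sum_neg_distrib, Real.exp_sum]
  exact prod_le_prod (fun i hi => sub_nonneg.2 (ha i hi)) fun i _ => Real.one_sub_le_exp_neg (a i)

lemma sum_Ico_le_tsum_nat_add {c : ℕ → ℝ} (hc : ∀ n, 0 ≤ c n) (hsum : Summable c) (m n : ℕ) :
    ∑ i ∈ Ico m n, c i ≤ ∑' k, c (k + m) := by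
  simp_rw [sum_Ico_eq_sum_range, add_comm m]
  exact (hsum.comp_injective (add_left_injective m)).sum_le_tsum _ fun k _ => hc _

lemma tendsto_sum_Ico_atTop {a : ℕ → ℝ} (hdiv : Tendsto (fun n => ∑ i ∈ range n, a i) atTop atTop)
    (m : ℕ) : Tendsto (fun n => ∑ i ∈ Ico m n, a i) atTop atTop := by
  refine (tendsto_atTop_add_const_right _ (-∑ i ∈ range m, a i) hdiv).congr' ?_
  filter_upwards [eventually_ge_atTop m] with n hmn
  rw [sum_Ico_eq_sub _ hmn, sub_eq_add_neg]

theorem tendsto_zero_of_le_one_sub_mul_add {s a c : ℕ → ℝ} (hs : ∀ n, 0 ≤ s n)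
    (ha₀ : ∀ n, 0 ≤ a n) (ha₁ : ∀ n, a n ≤ 1)
    (hdiv : Tendsto (fun n => ∑ i ∈ range n, a i) atTop atTop)
    (hc : ∀ n, 0 ≤ c n) (hsum : Summable c)
    (hrec : ∀ n, s (n + 1) ≤ (1 - a n) * s n + c n) :
    Tendsto s atTop (𝓝 0) := by
  refine tendsto_order.2 ⟨fun ε hε => .of_forall fun n => hε.trans_le (hs n), fun ε hε => ?_⟩
  obtain ⟨m, hm⟩ := ((tendsto_sum_nat_add c).eventually (gt_mem_nhds hε)).exists
  have hbound : ∀ n ≥ m, s n ≤ Real.exp (-∑ i ∈ Ico m n, a i) * s m + ∑' k, c (k + m) := by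
    intro n hmn
    calc s n ≤ (∏ i ∈ Ico m n, (1 - a i)) * s m + ∑ i ∈ Ico m n, c i :=
          le_prod_mul_add_sum_of_le_mul_add (fun n => sub_nonneg.2 (ha₁ n))
            (fun n => sub_le_self _ (ha₀ n)) hc hrec hmn
      _ ≤ _ := by
        gcongr
        exacts [hs m, prod_one_sub_le_exp_neg_sum _ fun i _ => ha₁ i,
          sum_Ico_le_tsum_nat_add hc hsum m n]
  have hlim : Tendsto (fun n => Real.exp (-∑ i ∈ Ico m n, a i) * s m + ∑' k, c (k + m))
      atTop (𝓝 (∑' k, c (k + m))) := by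
    simpa using ((Real.tendsto_exp_atBot.comp
      (tendsto_neg_atTop_atBot.comp (tendsto_sum_Ico_atTop hdiv m))).mul_const (s m)).add_const
        (∑' k, c (k + m))
  filter_upwards [hlim.eventually (gt_mem_nhds hm), eventually_ge_atTop m] with n hn hmn
  exact (hbound n hmn).trans_lt hn

theorem stmt_2
    (s : ℕ → ℝ) (hs : ∀ n, 0 ≤ s n)
    (a : ℕ → ℝ) (ha : ∀ n, a n ∈ Set.Ioo (0 : ℝ) 1)
    (hadiv : Tendsto (fun n => ∑ i ∈ Finset.range n, a i) atTop atTop)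
    (b : ℕ → ℝ) (hb : Summable (fun n => |a n * b n|))
    (hrec : ∀ n, s (n + 1) ≤ (1 - a n) * s n + a n * b n) :
    Tendsto s atTop (nhds 0) :=
  tendsto_zero_of_le_one_sub_mul_add hs (fun n => (ha n).1.le) (fun n => (ha n).2.le) hadiv
    (fun _ => abs_nonneg _) hb fun n => (hrec n).trans (add_le_add_right (le_abs_self _) _)
end

section
/- Let X be a strictly convex normed space, T₁ an attracting nonexpansive self-mapping and T₂ a nonexpansive self-mapping of a subset C, having a common fixed point. Then Fix(T₁ ∘ T₂) = Fix(T₂ ∘ T₁) = Fix(T₁) ∩ Fix(T₂). -/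
/-!
Let `p` be a common fixed point. If `T₁ (T₂ x) = x` then
`‖x - p‖ = ‖T₁ (T₂ x) - p‖ ≤ ‖T₂ x - p‖ ≤ ‖x - p‖`, so `T₁` does not move `p` strictly closer
from `T₂ x`; by the attracting property `T₂ x` is fixed by `T₁`, hence `T₂ x = x` and `T₁ x = x`.
The case `T₂ (T₁ x) = x` is the same chain read from `x`.
-/

open Function Set

section

variable {α : Type*} [PseudoMetricSpace α] {C : Set α} {f g : α → α} {p x : α}

theorem isFixedPt_comp_iff_of_attracting_outer
    (hf : ∀ y ∈ C, ¬IsFixedPt f y → dist (f y) p < dist y p)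
    (hg : ∀ y ∈ C, dist (g y) p ≤ dist y p) (hgC : MapsTo g C C) (hx : x ∈ C) :
    IsFixedPt (f ∘ g) x ↔ IsFixedPt f x ∧ IsFixedPt g x := by
  refine ⟨fun hfg => ?_, fun h => h.1.comp h.2⟩
  have hfgx : IsFixedPt f (g x) := by
    by_contra hne
    have := hf (g x) (hgC hx) hne
    rw [show f (g x) = x from hfg] at this
    exact (this.trans_le (hg x hx)).false
  have hgx : IsFixedPt g x := hfgx.symm.trans hfg
  exact ⟨hgx.eq ▸ hfgx, hgx⟩

theorem isFixedPt_comp_iff_of_attracting_inner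
    (hf : ∀ y ∈ C, ¬IsFixedPt f y → dist (f y) p < dist y p)
    (hg : ∀ y ∈ C, dist (g y) p ≤ dist y p) (hfC : MapsTo f C C) (hx : x ∈ C) :
    IsFixedPt (g ∘ f) x ↔ IsFixedPt f x ∧ IsFixedPt g x := by
  refine ⟨fun hgf => ?_, fun h => h.2.comp h.1⟩
  have hfx : IsFixedPt f x := by
    by_contra hne
    have := hg (f x) (hfC hx)
    rw [show g (f x) = x from hgf] at this
    exact (this.trans_lt (hf x hx hne)).false
  exact ⟨hfx, by rwa [IsFixedPt, comp_apply, hfx.eq] at hgf⟩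

end

theorem stmt_4_general
    {X : Type*} [NormedAddCommGroup X]
    (C : Set X)
    (T₁ T₂ : X → X) (hT₁C : ∀ x ∈ C, T₁ x ∈ C) (hT₂C : ∀ x ∈ C, T₂ x ∈ C)
    (hT₂ : ∀ x ∈ C, ∀ y ∈ C, ‖T₂ x - T₂ y‖ ≤ ‖x - y‖)
    (hattr : ∀ x ∈ C, T₁ x ≠ x → ∀ p ∈ C, T₁ p = p → ‖T₁ x - p‖ < ‖x - p‖)
    (hcommon : ∃ p ∈ C, T₁ p = p ∧ T₂ p = p) :
    {x ∈ C | T₁ (T₂ x) = x} = {x ∈ C | T₂ (T₁ x) = x} ∧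
      {x ∈ C | T₁ (T₂ x) = x} = {x ∈ C | T₁ x = x} ∩ {x ∈ C | T₂ x = x} := by
  obtain ⟨p, hpC, hp₁, hp₂⟩ := hcommon
  have hT₁p : ∀ x ∈ C, ¬IsFixedPt T₁ x → dist (T₁ x) p < dist x p := fun x hx hne => by
    simpa only [dist_eq_norm] using hattr x hx hne p hpC hp₁
  have hT₂p : ∀ x ∈ C, dist (T₂ x) p ≤ dist x p := fun x hx => by
    simpa only [dist_eq_norm, hp₂] using hT₂ x hx p hpC
  have h₁₂ : ∀ x ∈ C, T₁ (T₂ x) = x ↔ T₁ x = x ∧ T₂ x = x := fun x hx =>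
    isFixedPt_comp_iff_of_attracting_outer hT₁p hT₂p hT₂C hx
  have h₂₁ : ∀ x ∈ C, T₂ (T₁ x) = x ↔ T₁ x = x ∧ T₂ x = x := fun x hx =>
    isFixedPt_comp_iff_of_attracting_inner hT₁p hT₂p hT₁C hx
  constructor <;> ext x
  · exact ⟨fun ⟨hx, h⟩ => ⟨hx, (h₂₁ x hx).2 ((h₁₂ x hx).1 h)⟩,
      fun ⟨hx, h⟩ => ⟨hx, (h₁₂ x hx).2 ((h₂₁ x hx).1 h)⟩⟩
  · exact ⟨fun ⟨hx, h⟩ => ⟨⟨hx, ((h₁₂ x hx).1 h).1⟩, hx, ((h₁₂ x hx).1 h).2⟩,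
      fun ⟨⟨hx, h₁⟩, _, h₂⟩ => ⟨hx, (h₁₂ x hx).2 ⟨h₁, h₂⟩⟩⟩

theorem stmt_4
    {X : Type*} [NormedAddCommGroup X] [NormedSpace ℝ X] [StrictConvexSpace ℝ X]
    (C : Set X)
    (T₁ T₂ : X → X) (hT₁C : ∀ x ∈ C, T₁ x ∈ C) (hT₂C : ∀ x ∈ C, T₂ x ∈ C)
    (hT₁ : ∀ x ∈ C, ∀ y ∈ C, ‖T₁ x - T₁ y‖ ≤ ‖x - y‖)
    (hT₂ : ∀ x ∈ C, ∀ y ∈ C, ‖T₂ x - T₂ y‖ ≤ ‖x - y‖)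
    (hattr : ∀ x ∈ C, T₁ x ≠ x → ∀ p ∈ C, T₁ p = p → ‖T₁ x - p‖ < ‖x - p‖)
    (hcommon : ∃ p ∈ C, T₁ p = p ∧ T₂ p = p) :
    {x ∈ C | T₁ (T₂ x) = x} = {x ∈ C | T₂ (T₁ x) = x} ∧
      {x ∈ C | T₁ (T₂ x) = x} = {x ∈ C | T₁ x = x} ∩ {x ∈ C | T₂ x = x} :=
  stmt_4_general C T₁ T₂ hT₁C hT₂C hT₂ hattr hcommon
end

section
/- Let X be a strictly convex normed space, {T_i}_{i∈I} a finite family of nonexpansive self-mappings of a convex set C with ⋂_i Fix(T_i) ≠ ∅, and {λ_i} positive reals with Σ λ_i = 1. Then Fix(Σ_i λ_i T_i) = ⋂_i Fix(T_i). -/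
open Filter Topology

theorem stmt_7
    {X : Type*} [NormedAddCommGroup X] [NormedSpace ℝ X] [StrictConvexSpace ℝ X]
    {I : Type*} [Fintype I]
    (C : Set X) (hC : Convex ℝ C)
    (T : I → X → X) (hTC : ∀ i, ∀ x ∈ C, T i x ∈ C)
    (hT : ∀ i, ∀ x ∈ C, ∀ y ∈ C, ‖T i x - T i y‖ ≤ ‖x - y‖)
    (l : I → ℝ) (hl : ∀ i, 0 < l i) (hlsum : ∑ i, l i = 1)
    (hcommon : ∃ p ∈ C, ∀ i, T i p = p) :
    {x ∈ C | ∑ i, l i • T i x = x} = {x ∈ C | ∀ i, T i x = x} := by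
  classical
  obtain ⟨p, hpC, hp⟩ := hcommon
  ext x
  simp only [Set.mem_setOf_eq]
  constructor
  · rintro ⟨hxC, hx⟩
    refine ⟨hxC, fun i₀ => ?_⟩
    set R := ‖x - p‖ with hR
    -- each T i x - p has norm ≤ R
    have hnorm : ∀ i, ‖T i x - p‖ ≤ R := by
      intro i
      have := hT i x hxC p hpC
      rwa [hp i] at this
    -- x - p = ∑ l i • (T i x - p)
    have hsum : x - p = ∑ i, l i • (T i x - p) := by
      simp only [smul_sub, Finset.sum_sub_distrib, hx, ← Finset.sum_smul, hlsum, one_smul]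
    rcases eq_or_lt_of_le (norm_nonneg (x - p)) with hR0 | hR0
    · -- R = 0 : x = p
      have hxp : x = p := by
        have : x - p = 0 := by rw [← norm_eq_zero]; exact hR0.symm
        exact sub_eq_zero.mp this
      rw [hxp]; exact hp i₀
    · set u := l i₀ • (T i₀ x - p) with hu
      set w := ∑ i ∈ Finset.univ.erase i₀, l i • (T i x - p) with hw
      have huw : u + w = x - p := by
        rw [hsum, hu, hw]
        exact Finset.add_sum_erase Finset.univ (fun i => l i • (T i x - p)) (Finset.mem_univ i₀)
      have hnu : ‖u‖ ≤ l i₀ * R := by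
        rw [hu, norm_smul, Real.norm_eq_abs, abs_of_pos (hl i₀)]
        exact mul_le_mul_of_nonneg_left (hnorm i₀) (hl i₀).le
      have hnw : ‖w‖ ≤ (1 - l i₀) * R := by
        calc ‖w‖ ≤ ∑ i ∈ Finset.univ.erase i₀, ‖l i • (T i x - p)‖ := norm_sum_le _ _
          _ ≤ ∑ i ∈ Finset.univ.erase i₀, l i * R := by
              refine Finset.sum_le_sum fun i _ => ?_
              rw [norm_smul, Real.norm_eq_abs, abs_of_pos (hl i)]
              exact mul_le_mul_of_nonneg_left (hnorm i) (hl i).le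
          _ = (1 - l i₀) * R := by
              rw [← Finset.sum_mul]
              congr 1
              have := Finset.add_sum_erase _ l (Finset.mem_univ i₀)
              rw [hlsum] at this
              linarith
      have hRle : R ≤ ‖u‖ + ‖w‖ := by
        calc R = ‖u + w‖ := by rw [huw]
          _ ≤ ‖u‖ + ‖w‖ := norm_add_le _ _
      have hnu' : ‖u‖ = l i₀ * R := le_antisymm hnu (by linarith)
      have hadd : ‖u + w‖ = ‖u‖ + ‖w‖ := by
        rw [huw]; linarith
      have hray : SameRay ℝ u w := sameRay_iff_norm_add.mpr hadd
      have hray2 : SameRay ℝ u (x - p) := by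
        rw [← huw]; exact (SameRay.refl u).add_right hray
      have hune : u ≠ 0 := by
        rw [← norm_pos_iff, hnu']
        exact mul_pos (hl i₀) hR0
      have hxpne : x - p ≠ 0 := by
        rw [← norm_pos_iff]; exact hR0
      obtain ⟨r₁, r₂, hr₁, hr₂, hreq⟩ := hray2.exists_pos hune hxpne
      have hnorms : r₁ * ‖u‖ = r₂ * R := by
        have h := congrArg norm hreq
        simp only [norm_smul, Real.norm_eq_abs,
          abs_of_pos hr₁, abs_of_pos hr₂] at h
        exact h
      have hrr : r₂ = r₁ * l i₀ := by
        rw [hnu'] at hnorms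
        have hRne : R ≠ 0 := ne_of_gt hR0
        have h' : (r₁ * l i₀) * R = r₂ * R := by rw [mul_assoc]; exact hnorms
        exact (mul_right_cancel₀ hRne h').symm
      have : u = l i₀ • (x - p) := by
        have h2 : r₁ • u = r₁ • (l i₀ • (x - p)) := by
          rw [hreq, hrr, smul_smul, mul_comm]
        exact smul_right_injective X (ne_of_gt hr₁) h2
      have h3 : T i₀ x - p = x - p := by
        apply smul_right_injective X (ne_of_gt (hl i₀))
        show l i₀ • (T i₀ x - p) = l i₀ • (x - p)
        rw [← hu]; exact this
      have := congrArg (· + p) h3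
      simpa using this
  · rintro ⟨hxC, hx⟩
    refine ⟨hxC, ?_⟩
    simp only [hx, ← Finset.sum_smul, hlsum, one_smul]
end

section
/- Let T_j (j = 1,…,m) be nonexpansive self-mappings of C, {β_n^{(j)}} ⊂ (0,1), and define recursively Γ_n^{(m+1)} x = x and Γ_n^{(j)} x = β_n^{(j)} x + (1−β_n^{(j)}) T_j(Γ_n^{(j+1)} x). Then for every x and every j ∈ {1,…,m}: ‖Γ_{n+1}^{(j)} x − Γ_n^{(j)} x‖ ≤ K · Σ_{p=j}^m |β_{n+1}^{(p)} − β_n^{(p)}|, where K is a constant depending only on x and the mappings T_p for p ≥ j. -/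
open Filter Topology

/-- `Gamma T β m n k` is the mapping `Γ_n^{(j)}` with `k = m + 1 - j` "inner layers":
`Gamma T β m n 0 = Γ_n^{(m+1)} = id` and
`Γ_n^{(j)} x = β_n^{(j)} • x + (1 - β_n^{(j)}) • T_j (Γ_n^{(j+1)} x)`
corresponds to `Gamma T β m n (k+1) x = β (m-k) n • x + (1 - β (m-k) n) • T (m-k) (Gamma T β m n k x)`. -/
def Gamma {X : Type*} [AddCommGroup X] [Module ℝ X]
    (T : ℕ → X → X) (β : ℕ → ℕ → ℝ) (m n : ℕ) : ℕ → X → X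
  | 0 => id
  | k + 1 => fun x => β (m - k) n • x + (1 - β (m - k) n) • T (m - k) (Gamma T β m n k x)

/-!
Subtracting the recursions for `n + 1` and `n` gives
`Γ_{n+1}^{(j)} x - Γ_n^{(j)} x = (β_{n+1}^{(j)} - β_n^{(j)}) (x - T_j Γ_n^{(j+1)} x)
  + (1 - β_{n+1}^{(j)}) (T_j Γ_{n+1}^{(j+1)} x - T_j Γ_n^{(j+1)} x)`.
Since every `Γ_n^{(i)}` maps `C` into itself, nonexpansiveness bounds `‖x - T_j Γ_n^{(j+1)} x‖` by
`∑_{p ≥ j} ‖T_p x - x‖` uniformly in `n`, and the second term by `‖Γ_{n+1}^{(j+1)} x - Γ_n^{(j+1)} x‖`;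
a downward induction on `j` then accumulates the constants.
-/

theorem sum_Icc_sub_succ_eq_add {f : ℕ → ℝ} {m k : ℕ} (hk : k ≤ m) :
    ∑ p ∈ Finset.Icc (m + 1 - (k + 1)) m, f p =
      f (m - k) + ∑ p ∈ Finset.Icc (m + 1 - k) m, f p := by
  rw [show m + 1 - (k + 1) = m - k by omega, show m + 1 - k = m - k + 1 by omega,
    ← Finset.insert_Icc_add_one_left_eq_Icc (Nat.sub_le m k), Finset.sum_insert (by simp)]

section ConvexCombination

variable {X : Type*} [NormedAddCommGroup X]

theorem norm_apply_sub_le_add {S : X → X} {x y : X} (hS : ‖S y - S x‖ ≤ ‖y - x‖) :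
    ‖S y - x‖ ≤ ‖y - x‖ + ‖S x - x‖ :=
  (norm_sub_le_norm_sub_add_norm_sub _ _ _).trans (add_le_add hS le_rfl)

variable [NormedSpace ℝ X]

theorem norm_one_sub_smul_le {t : ℝ} (ht : t ∈ Set.Icc (0 : ℝ) 1) (v : X) :
    ‖(1 - t) • v‖ ≤ ‖v‖ := by
  rw [norm_smul, Real.norm_of_nonneg (sub_nonneg.mpr ht.2)]
  exact mul_le_of_le_one_left (norm_nonneg v) (by linarith [ht.1])

theorem norm_smul_add_one_sub_smul_sub_le {t : ℝ} (ht : t ∈ Set.Icc (0 : ℝ) 1) (x z : X) :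
    ‖t • x + (1 - t) • z - x‖ ≤ ‖z - x‖ := by
  have hdecomp : t • x + (1 - t) • z - x = (1 - t) • (z - x) := by module
  exact hdecomp ▸ norm_one_sub_smul_le ht _

theorem norm_smul_add_one_sub_smul_sub_smul_add_one_sub_smul_le {s t : ℝ}
    (ht : t ∈ Set.Icc (0 : ℝ) 1) (x z w : X) :
    ‖(t • x + (1 - t) • z) - (s • x + (1 - s) • w)‖ ≤ |t - s| * ‖x - w‖ + ‖z - w‖ := by
  have hdecomp : (t • x + (1 - t) • z) - (s • x + (1 - s) • w)
      = (t - s) • (x - w) + (1 - t) • (z - w) := by module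
  rw [hdecomp, ← Real.norm_eq_abs, ← norm_smul]
  exact (norm_add_le _ _).trans (add_le_add le_rfl (norm_one_sub_smul_le ht _))

end ConvexCombination

namespace Gamma

variable {X : Type*} [NormedAddCommGroup X] [NormedSpace ℝ X]
  {C : Set X} {m : ℕ} {T : ℕ → X → X} {β : ℕ → ℕ → ℝ}

theorem apply_mem (hC : Convex ℝ C) (hTC : ∀ j, 1 ≤ j → j ≤ m → ∀ x ∈ C, T j x ∈ C)
    (hβ : ∀ j n, β j n ∈ Set.Icc (0 : ℝ) 1) (n : ℕ) {k : ℕ} (hk : k ≤ m) {x : X} (hx : x ∈ C) :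
    Gamma T β m n k x ∈ C := by
  induction k with
  | zero => exact hx
  | succ k ih =>
    have hb := hβ (m - k) n
    exact hC hx (hTC _ (by omega) (by omega) _ (ih (by omega))) hb.1 (by linarith [hb.2])
      (by ring)

theorem norm_sub_self_le (hC : Convex ℝ C) (hTC : ∀ j, 1 ≤ j → j ≤ m → ∀ x ∈ C, T j x ∈ C)
    (hT : ∀ j, 1 ≤ j → j ≤ m → ∀ x ∈ C, ∀ y ∈ C, ‖T j x - T j y‖ ≤ ‖x - y‖)
    (hβ : ∀ j n, β j n ∈ Set.Icc (0 : ℝ) 1) (n : ℕ) {k : ℕ} (hk : k ≤ m) {x : X} (hx : x ∈ C) :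
    ‖Gamma T β m n k x - x‖ ≤ ∑ i ∈ Finset.range k, ‖T (m - i) x - x‖ := by
  induction k with
  | zero => simp [Gamma]
  | succ k ih =>
    have hy := apply_mem hC hTC hβ n (k := k) (by omega) hx
    calc ‖Gamma T β m n (k + 1) x - x‖
        ≤ ‖T (m - k) (Gamma T β m n k x) - x‖ :=
          norm_smul_add_one_sub_smul_sub_le (hβ _ _) _ _
      _ ≤ ‖Gamma T β m n k x - x‖ + ‖T (m - k) x - x‖ :=
          norm_apply_sub_le_add (hT _ (by omega) (by omega) _ hy _ hx)
      _ ≤ ∑ i ∈ Finset.range (k + 1), ‖T (m - i) x - x‖ := by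
          rw [Finset.sum_range_succ]
          exact add_le_add (ih (by omega)) le_rfl

theorem norm_sub_apply_le (hC : Convex ℝ C) (hTC : ∀ j, 1 ≤ j → j ≤ m → ∀ x ∈ C, T j x ∈ C)
    (hT : ∀ j, 1 ≤ j → j ≤ m → ∀ x ∈ C, ∀ y ∈ C, ‖T j x - T j y‖ ≤ ‖x - y‖)
    (hβ : ∀ j n, β j n ∈ Set.Icc (0 : ℝ) 1) (n : ℕ) {k : ℕ} (hk : k < m) {x : X} (hx : x ∈ C) :
    ‖x - T (m - k) (Gamma T β m n k x)‖ ≤ ∑ i ∈ Finset.range (k + 1), ‖T (m - i) x - x‖ := by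
  have hy := apply_mem hC hTC hβ n hk.le hx
  rw [norm_sub_rev, Finset.sum_range_succ]
  exact (norm_apply_sub_le_add (hT _ (by omega) (by omega) _ hy _ hx)).trans
    (add_le_add (norm_sub_self_le hC hTC hT hβ n hk.le hx) le_rfl)

theorem exists_norm_succ_sub_le (hC : Convex ℝ C)
    (hTC : ∀ j, 1 ≤ j → j ≤ m → ∀ x ∈ C, T j x ∈ C)
    (hT : ∀ j, 1 ≤ j → j ≤ m → ∀ x ∈ C, ∀ y ∈ C, ‖T j x - T j y‖ ≤ ‖x - y‖)
    (hβ : ∀ j n, β j n ∈ Set.Icc (0 : ℝ) 1) {k : ℕ} (hk : k ≤ m) {x : X} (hx : x ∈ C) :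
    ∃ K, 0 ≤ K ∧ ∀ n, ‖Gamma T β m (n + 1) k x - Gamma T β m n k x‖ ≤
      K * ∑ p ∈ Finset.Icc (m + 1 - k) m, |β p (n + 1) - β p n| := by
  induction k with
  | zero => exact ⟨0, le_rfl, fun n => by simp [Gamma]⟩
  | succ k ih =>
    obtain ⟨K, hK, hKn⟩ := ih (by omega)
    set M := ∑ i ∈ Finset.range (k + 1), ‖T (m - i) x - x‖
    have hM : 0 ≤ M := Finset.sum_nonneg fun _ _ => norm_nonneg _
    refine ⟨K + M, add_nonneg hK hM, fun n => ?_⟩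
    set y' := Gamma T β m (n + 1) k x
    set y := Gamma T β m n k x
    set δ := |β (m - k) (n + 1) - β (m - k) n|
    set S := ∑ p ∈ Finset.Icc (m + 1 - k) m, |β p (n + 1) - β p n|
    have hS : 0 ≤ S := Finset.sum_nonneg fun _ _ => abs_nonneg _
    have hT_y : ‖T (m - k) y' - T (m - k) y‖ ≤ ‖y' - y‖ :=
      hT _ (by omega) (by omega) _ (apply_mem hC hTC hβ _ (by omega) hx) _
        (apply_mem hC hTC hβ _ (by omega) hx)
    calc ‖Gamma T β m (n + 1) (k + 1) x - Gamma T β m n (k + 1) x‖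
        ≤ δ * ‖x - T (m - k) y‖ + ‖T (m - k) y' - T (m - k) y‖ :=
          norm_smul_add_one_sub_smul_sub_smul_add_one_sub_smul_le (hβ _ _) _ _ _
      _ ≤ δ * M + K * S :=
          add_le_add (mul_le_mul_of_nonneg_left (norm_sub_apply_le hC hTC hT hβ n hk hx)
            (abs_nonneg _)) (hT_y.trans (hKn n))
      _ ≤ (K + M) * (δ + S) := by nlinarith [abs_nonneg (β (m - k) (n + 1) - β (m - k) n)]
      _ = (K + M) * ∑ p ∈ Finset.Icc (m + 1 - (k + 1)) m, |β p (n + 1) - β p n| := by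
          rw [sum_Icc_sub_succ_eq_add (by omega)]

end Gamma

theorem stmt_9_general
    {X : Type*} [NormedAddCommGroup X] [NormedSpace ℝ X]
    (C : Set X) (hC : Convex ℝ C)
    (m : ℕ)
    (T : ℕ → X → X) (hTC : ∀ j, 1 ≤ j → j ≤ m → ∀ x ∈ C, T j x ∈ C)
    (hT : ∀ j, 1 ≤ j → j ≤ m → ∀ x ∈ C, ∀ y ∈ C, ‖T j x - T j y‖ ≤ ‖x - y‖)
    (β : ℕ → ℕ → ℝ) (hβ : ∀ j n, β j n ∈ Set.Ioo (0 : ℝ) 1) :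
    ∀ x ∈ C, ∀ j, 1 ≤ j → j ≤ m → ∃ K, 0 ≤ K ∧ ∀ n,
      ‖Gamma T β m (n + 1) (m + 1 - j) x - Gamma T β m n (m + 1 - j) x‖ ≤
        K * ∑ p ∈ Finset.Icc j m, |β p (n + 1) - β p n| := by
  intro x hx j hj1 hj2
  have hβ' : ∀ j n, β j n ∈ Set.Icc (0 : ℝ) 1 := fun j n => Set.Ioo_subset_Icc_self (hβ j n)
  have hj : m + 1 - (m + 1 - j) = j := by omega
  simpa only [hj] using
    Gamma.exists_norm_succ_sub_le hC hTC hT hβ' (k := m + 1 - j) (by omega) hx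

theorem stmt_9
    {X : Type*} [NormedAddCommGroup X] [NormedSpace ℝ X]
    (C : Set X) (hC : Convex ℝ C)
    (m : ℕ) (hm : 0 < m)
    (T : ℕ → X → X) (hTC : ∀ j, 1 ≤ j → j ≤ m → ∀ x ∈ C, T j x ∈ C)
    (hT : ∀ j, 1 ≤ j → j ≤ m → ∀ x ∈ C, ∀ y ∈ C, ‖T j x - T j y‖ ≤ ‖x - y‖)
    (β : ℕ → ℕ → ℝ) (hβ : ∀ j n, β j n ∈ Set.Ioo (0 : ℝ) 1) :
    ∀ x ∈ C, ∀ j, 1 ≤ j → j ≤ m → ∃ K, 0 ≤ K ∧ ∀ n,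
      ‖Gamma T β m (n + 1) (m + 1 - j) x - Gamma T β m n (m + 1 - j) x‖ ≤
        K * ∑ p ∈ Finset.Icc j m, |β p (n + 1) - β p n| :=
  stmt_9_general C hC m T hTC hT β hβ
end

section
/- Let T_j (j = 1,…,m) be nonexpansive self-mappings sharing a common fixed point, {β_n^{(j)}} ⊂ (0,1) with β_n^{(j)} → 0 for each j, and define Γ_n^{(j)} as Γ_n^{(m+1)} x = x, Γ_n^{(j)} x = β_n^{(j)} x + (1−β_n^{(j)}) T_j(Γ_n^{(j+1)} x). Then for any bounded sequence {x_n}, ‖Γ_n^{(1)} x_n − T_1 T_2 ⋯ T_m x_n‖ → 0. -/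
open Filter Topology

/-- `compDown T m k = T (m-k+1) ∘ ⋯ ∘ T m` so that `compDown T m m = T 1 ∘ T 2 ∘ ⋯ ∘ T m`. -/
def compDown {X : Type*} (T : ℕ → X → X) (m : ℕ) : ℕ → X → X
  | 0 => id
  | k + 1 => T (m - k) ∘ compDown T m k

theorem stmt_10
    {X : Type*} [NormedAddCommGroup X] [NormedSpace ℝ X]
    (C : Set X) (hC : Convex ℝ C)
    (m : ℕ) (hm : 0 < m)
    (T : ℕ → X → X) (hTC : ∀ j, 1 ≤ j → j ≤ m → ∀ x ∈ C, T j x ∈ C)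
    (hT : ∀ j, 1 ≤ j → j ≤ m → ∀ x ∈ C, ∀ y ∈ C, ‖T j x - T j y‖ ≤ ‖x - y‖)
    (hcommon : ∃ p ∈ C, ∀ j, 1 ≤ j → j ≤ m → T j p = p)
    (β : ℕ → ℕ → ℝ) (hβ : ∀ j n, β j n ∈ Set.Ioo (0 : ℝ) 1)
    (hβ0 : ∀ j, 1 ≤ j → j ≤ m → Tendsto (fun n => β j n) atTop (nhds 0))
    (x : ℕ → X) (hx : ∀ n, x n ∈ C) (hbdd : ∃ M, ∀ n, ‖x n‖ ≤ M) :
    Tendsto (fun n => ‖Gamma T β m n m (x n) - compDown T m m (x n)‖) atTop (nhds 0) := by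
  obtain ⟨p, hpC, hp⟩ := hcommon
  obtain ⟨M, hM⟩ := hbdd
  have hxp : ∀ n, ‖x n - p‖ ≤ M + ‖p‖ := fun n => by
    calc ‖x n - p‖ ≤ ‖x n‖ + ‖p‖ := norm_sub_le _ _
    _ ≤ M + ‖p‖ := by linarith [hM n]
  -- index bounds
  have hidx : ∀ k, k < m → 1 ≤ m - k ∧ m - k ≤ m := fun k hk =>
    ⟨Nat.le_sub_of_add_le (by omega), Nat.sub_le _ _⟩
  -- Gamma stays in C and is bounded
  have key : ∀ k, k ≤ m → ∀ n,
      Gamma T β m n k (x n) ∈ C ∧ ‖Gamma T β m n k (x n) - p‖ ≤ ‖x n - p‖ := by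
    intro k
    induction k with
    | zero => intro _ n; exact ⟨hx n, le_refl _⟩
    | succ k ih =>
      intro hk n
      obtain ⟨h1, h2⟩ := hidx k (by omega)
      obtain ⟨hmem, hbd⟩ := ih (by omega) n
      have hβn := hβ (m - k) n
      have hTmem := hTC (m - k) h1 h2 _ hmem
      constructor
      · exact hC (hx n) hTmem hβn.1.le (by linarith [hβn.2]) (by ring)
      · have hTp : T (m - k) p = p := hp _ h1 h2
        have hTbd : ‖T (m - k) (Gamma T β m n k (x n)) - p‖ ≤ ‖x n - p‖ := by
          calc ‖T (m - k) (Gamma T β m n k (x n)) - p‖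
              = ‖T (m - k) (Gamma T β m n k (x n)) - T (m - k) p‖ := by rw [hTp]
            _ ≤ ‖Gamma T β m n k (x n) - p‖ := hT _ h1 h2 _ hmem _ hpC
            _ ≤ ‖x n - p‖ := hbd
        have heq : Gamma T β m n (k + 1) (x n) - p
            = β (m - k) n • (x n - p)
              + (1 - β (m - k) n) • (T (m - k) (Gamma T β m n k (x n)) - p) := by
          simp only [Gamma, smul_sub]
          module
        rw [heq]
        calc ‖β (m - k) n • (x n - p)
              + (1 - β (m - k) n) • (T (m - k) (Gamma T β m n k (x n)) - p)‖
            ≤ ‖β (m - k) n • (x n - p)‖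
              + ‖(1 - β (m - k) n) • (T (m - k) (Gamma T β m n k (x n)) - p)‖ :=
              norm_add_le _ _
          _ = β (m - k) n * ‖x n - p‖
              + (1 - β (m - k) n) * ‖T (m - k) (Gamma T β m n k (x n)) - p‖ := by
              rw [norm_smul, norm_smul, Real.norm_eq_abs, Real.norm_eq_abs,
                abs_of_pos hβn.1, abs_of_pos (by linarith [hβn.2])]
          _ ≤ β (m - k) n * ‖x n - p‖ + (1 - β (m - k) n) * ‖x n - p‖ := by
              have := hβn.2; nlinarith
          _ = ‖x n - p‖ := by ring
  -- compDown stays in C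
  have keyCd : ∀ k, k ≤ m → ∀ n, compDown T m k (x n) ∈ C := by
    intro k
    induction k with
    | zero => intro _ n; exact hx n
    | succ k ih =>
      intro hk n
      obtain ⟨h1, h2⟩ := hidx k (by omega)
      exact hTC _ h1 h2 _ (ih (by omega) n)
  -- main induction
  have main : ∀ k, k ≤ m →
      Tendsto (fun n => ‖Gamma T β m n k (x n) - compDown T m k (x n)‖) atTop (nhds 0) := by
    intro k
    induction k with
    | zero =>
      intro _
      simp only [Gamma, compDown, id_eq, sub_self, norm_zero]
      exact tendsto_const_nhds
    | succ k ih =>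
      intro hk
      obtain ⟨h1, h2⟩ := hidx k (by omega)
      have ihk := ih (by omega)
      have hbound : ∀ n, ‖Gamma T β m n (k + 1) (x n) - compDown T m (k + 1) (x n)‖
          ≤ β (m - k) n * (2 * (M + ‖p‖))
            + ‖Gamma T β m n k (x n) - compDown T m k (x n)‖ := by
        intro n
        obtain ⟨hmem, hbd⟩ := key k (by omega) n
        have hTp : T (m - k) p = p := hp _ h1 h2
        have hβn := hβ (m - k) n
        have hTbd : ‖x n - T (m - k) (Gamma T β m n k (x n))‖ ≤ 2 * (M + ‖p‖) := by
          calc ‖x n - T (m - k) (Gamma T β m n k (x n))‖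
              ≤ ‖x n - p‖ + ‖p - T (m - k) (Gamma T β m n k (x n))‖ :=
                norm_sub_le_norm_sub_add_norm_sub _ _ _
            _ = ‖x n - p‖ + ‖T (m - k) p - T (m - k) (Gamma T β m n k (x n))‖ := by rw [hTp]
            _ ≤ ‖x n - p‖ + ‖p - Gamma T β m n k (x n)‖ := by
                linarith [hT _ h1 h2 _ hpC _ hmem]
            _ = ‖x n - p‖ + ‖Gamma T β m n k (x n) - p‖ := by rw [norm_sub_rev p (Gamma T β m n k (x n))]
            _ ≤ 2 * (M + ‖p‖) := by linarith [hxp n]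
        have heq : Gamma T β m n (k + 1) (x n) - compDown T m (k + 1) (x n)
            = β (m - k) n • (x n - T (m - k) (Gamma T β m n k (x n)))
              + (T (m - k) (Gamma T β m n k (x n)) - T (m - k) (compDown T m k (x n))) := by
          simp only [Gamma, compDown, Function.comp_apply, smul_sub]
          module
        rw [heq]
        calc ‖β (m - k) n • (x n - T (m - k) (Gamma T β m n k (x n)))
              + (T (m - k) (Gamma T β m n k (x n)) - T (m - k) (compDown T m k (x n)))‖
            ≤ ‖β (m - k) n • (x n - T (m - k) (Gamma T β m n k (x n)))‖
              + ‖T (m - k) (Gamma T β m n k (x n)) - T (m - k) (compDown T m k (x n))‖ :=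
              norm_add_le _ _
          _ ≤ β (m - k) n * (2 * (M + ‖p‖))
              + ‖Gamma T β m n k (x n) - compDown T m k (x n)‖ := by
              rw [norm_smul, Real.norm_eq_abs, abs_of_pos hβn.1]
              have := hT _ h1 h2 _ hmem _ (keyCd k (by omega) n)
              have := mul_le_mul_of_nonneg_left hTbd hβn.1.le
              linarith
      have hlim : Tendsto (fun n => β (m - k) n * (2 * (M + ‖p‖))
          + ‖Gamma T β m n k (x n) - compDown T m k (x n)‖) atTop (nhds 0) := by
        have := ((hβ0 (m - k) h1 h2).mul_const (2 * (M + ‖p‖))).add ihk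
        simpa using this
      exact squeeze_zero (fun n => norm_nonneg _) hbound hlim
  exact main m le_rfl
end

section
/- Suppose f is an α-contraction, T_n are nonexpansive mappings with a common fixed point, α_n ∈ (0,1), α_n → 0, Σ α_n = ∞, Σ|α_{n+N} − α_n| < ∞, and for the bounded iterates x_{n+1} = α_n f(x_n) + (1−α_n)T_n x_n one has ‖(1−α_{n+N})T_{n+N}x_n − (1−α_n)T_n x_n‖ ≤ δ_n M with Σ|δ_n| < ∞. Then ‖x_{n+N} − x_n‖ → 0. -/
open Filter Topology

lemma aux_tendsto_stmt14 (s b c : ℕ → ℝ) (hs : ∀ n, 0 ≤ s n) (hb0 : ∀ n, 0 ≤ b n) (hb1 : ∀ n, b n ≤ 1)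
    (hbdiv : Tendsto (fun n => ∑ i ∈ Finset.range n, b i) atTop atTop)
    (hc : Summable c) (hc0 : ∀ n, 0 ≤ c n)
    (hrec : ∀ n, s (n + 1) ≤ (1 - b n) * s n + c n) :
    Tendsto s atTop (nhds 0) := by
  have key : ∀ n m, s (n + m) ≤ (∏ k ∈ Finset.range m, (1 - b (n + k))) * s n
      + ∑ k ∈ Finset.range m, c (n + k) := by
    intro n m
    induction m with
    | zero => simp
    | succ m ih =>
      have h0 : (0:ℝ) ≤ 1 - b (n + m) := by linarith [hb1 (n+m)]
      have h1 : s (n + (m + 1)) ≤ (1 - b (n + m)) * s (n + m) + c (n + m) := by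
        have := hrec (n + m); rwa [show n + (m+1) = (n+m)+1 by ring]
      have h2 : (1 - b (n + m)) * s (n + m) ≤
          (1 - b (n + m)) * ((∏ k ∈ Finset.range m, (1 - b (n + k))) * s n
            + ∑ k ∈ Finset.range m, c (n + k)) :=
        mul_le_mul_of_nonneg_left ih h0
      rw [Finset.prod_range_succ, Finset.sum_range_succ]
      calc s (n + (m + 1)) ≤ (1 - b (n + m)) * s (n + m) + c (n + m) := h1
        _ ≤ (1 - b (n + m)) * ((∏ k ∈ Finset.range m, (1 - b (n + k))) * s n
              + ∑ k ∈ Finset.range m, c (n + k)) + c (n + m) := by linarith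
        _ ≤ (∏ k ∈ Finset.range m, (1 - b (n + k))) * (1 - b (n + m)) * s n
              + (∑ k ∈ Finset.range m, c (n + k) + c (n + m)) := by
            have hP : (0:ℝ) ≤ ∏ k ∈ Finset.range m, (1 - b (n + k)) :=
              Finset.prod_nonneg (fun k _ => by linarith [hb1 (n+k)])
            have hb' : (1 - b (n+m)) * (∑ k ∈ Finset.range m, c (n + k)) ≤
                ∑ k ∈ Finset.range m, c (n + k) := by
              have hsc : (0:ℝ) ≤ ∑ k ∈ Finset.range m, c (n + k) :=
                Finset.sum_nonneg (fun k _ => hc0 (n+k))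
              nlinarith [hb0 (n+m)]
            nlinarith [hs n]
  rw [Metric.tendsto_atTop]
  intro ε hε
  have htail : Tendsto (fun n => ∑' k, c (k + n)) atTop (nhds 0) := tendsto_sum_nat_add c
  obtain ⟨n₀, hn₀⟩ : ∃ n₀, ∑' k, c (k + n₀) < ε / 2 := by
    have := (htail.eventually (gt_mem_nhds (by linarith : (0:ℝ) < ε/2))).exists
    exact this
  set P : ℕ → ℝ := fun m => ∏ k ∈ Finset.range m, (1 - b (n₀ + k)) with hPdef
  have hP0 : ∀ m, 0 ≤ P m := fun m =>
    Finset.prod_nonneg (fun k _ => by linarith [hb1 (n₀+k)])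
  have hPle : ∀ m, P m ≤ Real.exp (-(∑ k ∈ Finset.range m, b (n₀ + k))) := by
    intro m
    calc P m ≤ ∏ k ∈ Finset.range m, Real.exp (-(b (n₀ + k))) := by
          apply Finset.prod_le_prod (fun k _ => by linarith [hb1 (n₀+k)])
          intro k _
          have := Real.add_one_le_exp (-(b (n₀ + k)))
          linarith
      _ = Real.exp (∑ k ∈ Finset.range m, -(b (n₀ + k))) := (Real.exp_sum _ _).symm
      _ = Real.exp (-(∑ k ∈ Finset.range m, b (n₀ + k))) := by rw [Finset.sum_neg_distrib]
  have hsumdiv : Tendsto (fun m => ∑ k ∈ Finset.range m, b (n₀ + k)) atTop atTop := by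
    have h1 : Tendsto (fun m => ∑ i ∈ Finset.range (n₀ + m), b i) atTop atTop :=
      hbdiv.comp ((tendsto_add_atTop_nat n₀).congr (fun n => add_comm n n₀))
    have h2 := tendsto_atTop_add_const_right atTop (-(∑ i ∈ Finset.range n₀, b i)) h1
    refine h2.congr (fun m => ?_)
    rw [Finset.sum_range_add]; ring
  have hPto : Tendsto P atTop (nhds 0) := by
    have he : Tendsto (fun m => Real.exp (-(∑ k ∈ Finset.range m, b (n₀ + k)))) atTop (nhds 0) :=
      Real.tendsto_exp_atBot.comp (tendsto_neg_atTop_atBot.comp hsumdiv)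
    exact squeeze_zero hP0 hPle he
  have hPs : Tendsto (fun m => P m * s n₀) atTop (nhds 0) := by
    simpa only [zero_mul] using hPto.mul_const (s n₀)
  obtain ⟨m₀, hm₀⟩ : ∃ m₀, ∀ m ≥ m₀, P m * s n₀ < ε / 2 := by
    have h := hPs.eventually (gt_mem_nhds (by linarith : (0:ℝ) < ε/2))
    rw [eventually_atTop] at h
    exact h
  refine ⟨n₀ + m₀, fun n hn => ?_⟩
  obtain ⟨m, rfl⟩ : ∃ m, n = n₀ + m := ⟨n - n₀, by omega⟩
  have hm : m₀ ≤ m := by omega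
  have hc' : Summable (fun k => c (k + n₀)) := (summable_nat_add_iff n₀).mpr hc
  have hsum_tail : ∑ k ∈ Finset.range m, c (n₀ + k) ≤ ∑' k, c (k + n₀) := by
    have := Summable.sum_le_tsum (Finset.range m) (fun k _ => hc0 (k + n₀)) hc'
    simpa [add_comm] using this
  have := key n₀ m
  have hfin : s (n₀ + m) < ε := by
    have := hm₀ m hm
    linarith
  rw [Real.dist_eq, sub_zero, abs_of_nonneg (hs _)]
  exact hfin

theorem stmt_14
    {X : Type*} [NormedAddCommGroup X] [NormedSpace ℝ X] [CompleteSpace X]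
    (C : Set X) (hCcl : IsClosed C) (hCcv : Convex ℝ C)
    (f : X → X) (hfC : ∀ x ∈ C, f x ∈ C)
    (α : ℝ) (hα0 : 0 < α) (hα1 : α < 1)
    (hf : ∀ x ∈ C, ∀ y ∈ C, ‖f x - f y‖ ≤ α * ‖x - y‖)
    (T : ℕ → X → X) (hTC : ∀ n, ∀ x ∈ C, T n x ∈ C)
    (hT : ∀ n, ∀ x ∈ C, ∀ y ∈ C, ‖T n x - T n y‖ ≤ ‖x - y‖)
    (hcommon : ∃ p ∈ C, ∀ n, T n p = p)
    (N : ℕ) (hN : 1 ≤ N)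
    (a : ℕ → ℝ) (ha : ∀ n, a n ∈ Set.Ioo (0 : ℝ) 1)
    (ha0 : Tendsto a atTop (nhds 0))
    (hadiv : Tendsto (fun n => ∑ i ∈ Finset.range n, a i) atTop atTop)
    (hasum : Summable (fun n => |a (n + N) - a n|))
    (x : ℕ → X) (hx0 : x 0 ∈ C)
    (hrec : ∀ n, x (n + 1) = a n • f (x n) + (1 - a n) • T n (x n))
    (hbdd : ∃ M', ∀ n, ‖x n‖ ≤ M')
    (M : ℝ) (hM : 0 < M) (δ : ℕ → ℝ) (hδ : Summable (fun n => |δ n|))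
    (hH1 : ∀ n, ‖(1 - a (n + N)) • T (n + N) (x n) - (1 - a n) • T n (x n)‖ ≤ δ n * M) :
    Tendsto (fun n => ‖x (n + N) - x n‖) atTop (nhds 0) := by
  obtain ⟨M', hM'⟩ := hbdd
  have hxC : ∀ n, x n ∈ C := by
    intro n
    induction n with
    | zero => exact hx0
    | succ n ih =>
      rw [hrec n]
      exact hCcv (hfC _ ih) (hTC n _ ih) (ha n).1.le (by linarith [(ha n).2]) (by ring)
  set K : ℝ := α * (M' + ‖x 0‖) + ‖f (x 0)‖ with hKdef
  have hK0 : 0 ≤ K := by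
    have := norm_nonneg (x 0)
    have := norm_nonneg (f (x 0))
    have := hM' 0
    nlinarith
  have hK : ∀ n, ‖f (x n)‖ ≤ K := by
    intro n
    have h1 : ‖f (x n)‖ ≤ ‖f (x n) - f (x 0)‖ + ‖f (x 0)‖ := by
      have := norm_add_le (f (x n) - f (x 0)) (f (x 0))
      simpa using this
    have h2 : ‖f (x n) - f (x 0)‖ ≤ α * ‖x n - x 0‖ := hf _ (hxC n) _ hx0
    have h3 : ‖x n - x 0‖ ≤ M' + ‖x 0‖ := by
      have := norm_sub_le (x n) (x 0)
      have := hM' n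
      linarith
    nlinarith
  set s : ℕ → ℝ := fun n => ‖x (n + N) - x n‖ with hsdef
  set b : ℕ → ℝ := fun n => (1 - α) * a (n + N) with hbdef
  set c : ℕ → ℝ := fun n => |a (n + N) - a n| * K + |δ n| * M with hcdef
  apply aux_tendsto_stmt14 s b c (fun n => norm_nonneg _)
  · intro n
    exact mul_nonneg (by linarith) (ha (n + N)).1.le
  · intro n
    show (1 - α) * a (n + N) ≤ 1
    nlinarith [(ha (n + N)).1, (ha (n + N)).2]
  · -- divergence of ∑ b
    have h1 : Tendsto (fun n => ∑ i ∈ Finset.range (N + n), a i) atTop atTop :=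
      hadiv.comp ((tendsto_add_atTop_nat N).congr (fun n => add_comm n N))
    have h2 := tendsto_atTop_add_const_right atTop (-(∑ i ∈ Finset.range N, a i)) h1
    have h3 : Tendsto (fun n => ∑ i ∈ Finset.range n, a (i + N)) atTop atTop := by
      refine h2.congr (fun n => ?_)
      rw [Finset.sum_range_add]
      simp only [add_comm]
      ring
    have h4 := h3.const_mul_atTop (by linarith : (0:ℝ) < 1 - α)
    refine h4.congr (fun n => ?_)
    rw [Finset.mul_sum]
  · exact (hasum.mul_right K).add (hδ.mul_right M)
  · intro n
    exact add_nonneg (mul_nonneg (abs_nonneg _) hK0) (mul_nonneg (abs_nonneg _) hM.le)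
  · intro n
    have e : x (n + 1 + N) - x (n + 1) =
        a (n + N) • (f (x (n + N)) - f (x n)) + (a (n + N) - a n) • f (x n)
        + (1 - a (n + N)) • (T (n + N) (x (n + N)) - T (n + N) (x n))
        + ((1 - a (n + N)) • T (n + N) (x n) - (1 - a n) • T n (x n)) := by
      rw [show n + 1 + N = (n + N) + 1 by ring, hrec (n + N), hrec n]
      module
    have hA : ‖a (n + N) • (f (x (n + N)) - f (x n))‖ ≤ a (n + N) * (α * s n) := by
      rw [norm_smul, Real.norm_eq_abs, abs_of_pos (ha (n + N)).1]
      exact mul_le_mul_of_nonneg_left (hf _ (hxC _) _ (hxC _)) (ha (n + N)).1.le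
    have hB : ‖(a (n + N) - a n) • f (x n)‖ ≤ |a (n + N) - a n| * K := by
      rw [norm_smul, Real.norm_eq_abs]
      exact mul_le_mul_of_nonneg_left (hK n) (abs_nonneg _)
    have hC : ‖(1 - a (n + N)) • (T (n + N) (x (n + N)) - T (n + N) (x n))‖ ≤
        (1 - a (n + N)) * s n := by
      rw [norm_smul, Real.norm_eq_abs, abs_of_pos (by linarith [(ha (n + N)).2] : (0:ℝ) < 1 - a (n + N))]
      exact mul_le_mul_of_nonneg_left (hT _ _ (hxC _) _ (hxC _))
        (by linarith [(ha (n + N)).2])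
    have hD : ‖(1 - a (n + N)) • T (n + N) (x n) - (1 - a n) • T n (x n)‖ ≤ |δ n| * M := by
      calc _ ≤ δ n * M := hH1 n
        _ ≤ |δ n| * M := mul_le_mul_of_nonneg_right (le_abs_self _) hM.le
    have snn : s (n + 1) = ‖x (n + 1 + N) - x (n + 1)‖ := rfl
    have htri : ‖x (n + 1 + N) - x (n + 1)‖ ≤
        ‖a (n + N) • (f (x (n + N)) - f (x n))‖ + ‖(a (n + N) - a n) • f (x n)‖
        + ‖(1 - a (n + N)) • (T (n + N) (x (n + N)) - T (n + N) (x n))‖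
        + ‖(1 - a (n + N)) • T (n + N) (x n) - (1 - a n) • T n (x n)‖ := by
      rw [e]
      refine le_trans (norm_add_le _ _) ?_
      gcongr
      refine le_trans (norm_add_le _ _) ?_
      gcongr
      exact norm_add_le _ _
    have hsn : s n = ‖x (n + N) - x n‖ := rfl
    rw [snn, hbdef, hcdef]
    simp only
    nlinarith [htri, hA, hB, hC, hD, norm_nonneg (x (n + N) - x n)]
end

section
/- Let F : C × C → ℝ be an equilibrium bifunction and for r > 0 define T_r(x) as the unique z ∈ C with F(z,y) + (1/r)⟨y−z, z−x⟩ ≥ 0 for all y ∈ C. Then for r, s > 0 and x, y ∈ H: ‖T_r(x) − T_s(y)‖ ≤ ‖x − y‖ + |1 − s/r| ‖T_r(y) − y‖, assuming T_r, T_s are well-defined single-valued mappings satisfying their defining variational inequalities and F is monotone (F(x,y) + F(y,x) ≤ 0). -/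
/-!
Adding the variational inequalities of `z₁ = T_r x` and `z₂ = T_s y` tested at each other's
point, monotonicity of `F` cancels the `F`-terms and leaves
`‖z₁ - z₂‖² ≤ ⟪z₁ - z₂, (x - y) + (1 - s/r) • (z₁ - x)⟫`.
With `s = r` this makes `T_r` nonexpansive, with `x = y` it bounds `‖T_r y - T_s y‖`, and the
triangle inequality through `T_r y` combines the two.
-/

open RealInnerProductSpace

section Resolvent

variable {H : Type*} [NormedAddCommGroup H] [InnerProductSpace ℝ H]

theorem norm_le_of_inner_self_le_inner {u v : H} (h : ⟪u, u⟫ ≤ ⟪u, v⟫) : ‖u‖ ≤ ‖v‖ := by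
  rcases (norm_nonneg u).eq_or_lt with hu | hu
  · rw [← hu]
    exact norm_nonneg v
  · refine le_of_mul_le_mul_left ?_ hu
    calc ‖u‖ * ‖u‖ = ⟪u, u⟫ := (real_inner_self_eq_norm_mul_norm u).symm
      _ ≤ ⟪u, v⟫ := h
      _ ≤ ‖u‖ * ‖v‖ := real_inner_le_norm u v

def IsResolvent (F : H → H → ℝ) (C : Set H) (r : ℝ) (x z : H) : Prop :=
  z ∈ C ∧ ∀ y ∈ C, 0 ≤ F z y + (1 / r) * ⟪y - z, z - x⟫

namespace IsResolvent

variable {F : H → H → ℝ} {C : Set H} {r s : ℝ} {x y z₁ z₂ : H}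

theorem inner_self_le (hF : ∀ x ∈ C, ∀ y ∈ C, F x y + F y x ≤ 0) (hs : 0 < s)
    (h₁ : IsResolvent F C r x z₁) (h₂ : IsResolvent F C s y z₂) :
    ⟪z₁ - z₂, z₁ - z₂⟫ ≤ ⟪z₁ - z₂, (z₁ - y) - (s / r) • (z₁ - x)⟫ := by
  have hsum : 0 ≤ (1 / r) * ⟪z₂ - z₁, z₁ - x⟫ + (1 / s) * ⟪z₁ - z₂, z₂ - y⟫ := by
    linarith [h₁.2 z₂ h₂.1, h₂.2 z₁ h₁.1, hF z₁ h₁.1 z₂ h₂.1]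
  rw [show z₂ - z₁ = -(z₁ - z₂) by abel, show z₂ - y = (z₁ - y) - (z₁ - z₂) by abel,
    inner_neg_left, inner_sub_right (z₁ - z₂) (z₁ - y)] at hsum
  rw [inner_sub_right (z₁ - z₂) (z₁ - y), real_inner_smul_right]
  have hscale : s * ((1 / r) * -⟪z₁ - z₂, z₁ - x⟫
      + (1 / s) * (⟪z₁ - z₂, z₁ - y⟫ - ⟪z₁ - z₂, z₁ - z₂⟫))
      = ⟪z₁ - z₂, z₁ - y⟫ - s / r * ⟪z₁ - z₂, z₁ - x⟫ - ⟪z₁ - z₂, z₁ - z₂⟫ := by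
    field_simp
    ring
  linarith [mul_nonneg hs.le hsum]

theorem norm_sub_le (hF : ∀ x ∈ C, ∀ y ∈ C, F x y + F y x ≤ 0) (hs : 0 < s)
    (h₁ : IsResolvent F C r x z₁) (h₂ : IsResolvent F C s y z₂) :
    ‖z₁ - z₂‖ ≤ ‖x - y‖ + |1 - s / r| * ‖z₁ - x‖ := by
  have hvec : (z₁ - y) - (s / r) • (z₁ - x) = (x - y) + (1 - s / r) • (z₁ - x) := by
    module
  calc ‖z₁ - z₂‖ ≤ ‖(x - y) + (1 - s / r) • (z₁ - x)‖ :=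
        hvec ▸ norm_le_of_inner_self_le_inner (h₁.inner_self_le hF hs h₂)
    _ ≤ ‖x - y‖ + ‖(1 - s / r) • (z₁ - x)‖ := norm_add_le _ _
    _ = ‖x - y‖ + |1 - s / r| * ‖z₁ - x‖ := by rw [norm_smul, Real.norm_eq_abs]

end IsResolvent

end Resolvent

theorem stmt_18_general
    {H : Type*} [NormedAddCommGroup H] [InnerProductSpace ℝ H]
    (C : Set H)
    (F : H → H → ℝ)
    (hF2 : ∀ x ∈ C, ∀ y ∈ C, F x y + F y x ≤ 0)
    (T : ℝ → H → H)
    (hTC : ∀ r : ℝ, 0 < r → ∀ x : H, T r x ∈ C)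
    (hTvi : ∀ r : ℝ, 0 < r → ∀ x : H, ∀ y ∈ C,
      0 ≤ F (T r x) y + (1 / r) * ⟪y - T r x, T r x - x⟫) :
    ∀ r s : ℝ, 0 < r → 0 < s → ∀ x y : H,
      ‖T r x - T s y‖ ≤ ‖x - y‖ + |1 - s / r| * ‖T r y - y‖ := by
  intro r s hr hs x y
  have hres : ∀ t, 0 < t → ∀ z, IsResolvent F C t z (T t z) :=
    fun t ht z => ⟨hTC t ht z, hTvi t ht z⟩
  have hnonexp := (hres r hr x).norm_sub_le hF2 hr (hres r hr y)
  have hstep := (hres r hr y).norm_sub_le hF2 hs (hres s hs y)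
  rw [div_self hr.ne', sub_self, abs_zero, zero_mul, add_zero] at hnonexp
  rw [sub_self, norm_zero, zero_add] at hstep
  calc ‖T r x - T s y‖ ≤ ‖T r x - T r y‖ + ‖T r y - T s y‖ :=
        norm_sub_le_norm_sub_add_norm_sub _ _ _
    _ ≤ ‖x - y‖ + |1 - s / r| * ‖T r y - y‖ := add_le_add hnonexp hstep

theorem stmt_18
    {H : Type*} [NormedAddCommGroup H] [InnerProductSpace ℝ H] [CompleteSpace H]
    (C : Set H) (hCne : C.Nonempty) (hCcl : IsClosed C) (hCcv : Convex ℝ C)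
    (F : H → H → ℝ)
    (hF1 : ∀ x ∈ C, F x x = 0)
    (hF2 : ∀ x ∈ C, ∀ y ∈ C, F x y + F y x ≤ 0)
    (T : ℝ → H → H)
    (hTC : ∀ r : ℝ, 0 < r → ∀ x : H, T r x ∈ C)
    (hTvi : ∀ r : ℝ, 0 < r → ∀ x : H, ∀ y ∈ C,
      0 ≤ F (T r x) y + (1 / r) * ⟪y - T r x, T r x - x⟫) :
    ∀ r s : ℝ, 0 < r → 0 < s → ∀ x y : H,
      ‖T r x - T s y‖ ≤ ‖x - y‖ + |1 - s / r| * ‖T r y - y‖ :=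
  stmt_18_general C F hF2 T hTC hTvi
end
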